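/- arXiv:2505.09199 — 2 statements merged into one kernel-verified Lean document; each statement's English description precedes it below -/
import Mathlib

section
/- Assume μ > 4 and either θ > θ^*(μ), or 0 ≤ θ < θ_*(μ). Then the equation S(x) = x has exactly one real solution; in the first case it lies in (0, x_*(μ)) and in the second case it lies in (x^*(μ), 1). -/
/-- The sigmoid nonlinearity `S(x) = 1/(1 + exp(-μ(x - θ)))`. -/
noncomputable def sigmoid (μ θ x : ℝ) : ℝ := 1 / (1 + Real.exp (-μ * (x - θ)))

/-- The function `f(x) = x + (1/μ)·ln((1−x)/x)`. -/
noncomputable def fmu (μ x : ℝ) : ℝ := x + (1 / μ) * Real.log ((1 - x) / x)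

/-- `x_*(μ) = 1/2 − √(1/4 − 1/μ)`. -/
noncomputable def xlow (μ : ℝ) : ℝ := 1 / 2 - Real.sqrt (1 / 4 - 1 / μ)

/-- `x^*(μ) = 1/2 + √(1/4 − 1/μ)`. -/
noncomputable def xhigh (μ : ℝ) : ℝ := 1 / 2 + Real.sqrt (1 / 4 - 1 / μ)

/-- `θ_*(μ) = f(x_*(μ))`. -/
noncomputable def thetalow (μ : ℝ) : ℝ := fmu μ (xlow μ)

/-- `θ^*(μ) = f(x^*(μ))`. -/
noncomputable def thetahigh (μ : ℝ) : ℝ := fmu μ (xhigh μ)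

/-!
Solving `S(x) = x` for `θ` shows that the fixed points of `S` are exactly the points
`x ∈ (0,1)` with `f(x) = θ`. Since `f'(x) = 1 - 1/(μ x (1-x))`, the function `f` decreases on
`(0, x_*]`, increases on `[x_*, x^*]` and decreases on `[x^*, 1)`, with `f → +∞` at `0`. Hence
`f ≤ θ^*` on `[x_*, 1)`, and a level `θ > θ^*` is attained exactly once, in `(0, x_*)`.
The symmetry `f(1 - x) = 1 - f(x)` turns the case `θ < θ_*` into this one.
-/

open Set Filter Topology

section

variable {μ θ x : ℝ}

theorem sigmoid_mem_Ioo : sigmoid μ θ x ∈ Ioo 0 1 := by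
  have hE := Real.exp_pos (-μ * (x - θ))
  unfold sigmoid
  exact ⟨by positivity, (div_lt_one (by positivity)).2 (by linarith)⟩

theorem sigmoid_eq_self_iff_fmu_eq (hμ : μ ≠ 0) (hx : x ∈ Ioo 0 1) :
    sigmoid μ θ x = x ↔ fmu μ x = θ := by
  obtain ⟨hx0, hx1⟩ := hx
  have h1x : 0 < 1 - x := by linarith
  calc sigmoid μ θ x = x ↔ Real.exp (-μ * (x - θ)) = (1 - x) / x := by
        unfold sigmoid
        rw [div_eq_iff (by positivity), eq_div_iff hx0.ne']
        constructor <;> intro h <;> linarith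
    _ ↔ -μ * (x - θ) = Real.log ((1 - x) / x) := by
        rw [← Real.exp_eq_exp (y := Real.log _), Real.exp_log (by positivity)]
    _ ↔ fmu μ x = θ := by
        unfold fmu
        field_simp
        constructor <;> intro h <;> linarith

theorem sigmoid_eq_self_iff (hμ : μ ≠ 0) :
    sigmoid μ θ x = x ↔ x ∈ Ioo 0 1 ∧ fmu μ x = θ := by
  refine ⟨fun h => ?_, fun ⟨hx, h⟩ => (sigmoid_eq_self_iff_fmu_eq hμ hx).2 h⟩
  have hx : x ∈ Ioo 0 1 := h ▸ sigmoid_mem_Ioo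
  exact ⟨hx, (sigmoid_eq_self_iff_fmu_eq hμ hx).1 h⟩

theorem fmu_one_sub (μ x : ℝ) : fmu μ (1 - x) = 1 - fmu μ x := by
  unfold fmu
  rw [sub_sub_cancel, ← inv_div (1 - x) x, Real.log_inv]
  ring

theorem xhigh_eq_one_sub_xlow (μ : ℝ) : xhigh μ = 1 - xlow μ := by
  unfold xlow xhigh; ring

theorem thetahigh_eq_one_sub_thetalow (μ : ℝ) : thetahigh μ = 1 - thetalow μ := by
  rw [thetahigh, xhigh_eq_one_sub_xlow, fmu_one_sub, thetalow]

theorem xlow_le_xhigh (μ : ℝ) : xlow μ ≤ xhigh μ := by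
  unfold xlow xhigh
  linarith [Real.sqrt_nonneg (1 / 4 - 1 / μ)]

theorem xlow_pos (hμ : 0 < μ) : 0 < xlow μ := by
  have hsqrt : Real.sqrt (1 / 4 - 1 / μ) < 1 / 2 :=
    (Real.sqrt_lt' one_half_pos).2 (by norm_num; positivity)
  unfold xlow
  linarith

theorem xhigh_lt_one (hμ : 0 < μ) : xhigh μ < 1 := by
  rw [xhigh_eq_one_sub_xlow]
  linarith [xlow_pos hμ]

theorem hasDerivAt_fmu (hx : x ∈ Ioo 0 1) :
    HasDerivAt (fmu μ) (1 - 1 / (μ * (x * (1 - x)))) x := by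
  obtain ⟨hx0, hx1⟩ := hx
  have h1x : 0 < 1 - x := by linarith
  have hsplit : HasDerivAt (fun y => y + 1 / μ * (Real.log (1 - y) - Real.log y))
      (1 + 1 / μ * (-1 / (1 - x) - 1 / x)) x :=
    (hasDerivAt_id' x).add (((((hasDerivAt_id' x).const_sub 1).log h1x.ne').sub
      ((hasDerivAt_id' x).log hx0.ne')).const_mul (1 / μ))
  have hval : 1 + 1 / μ * (-1 / (1 - x) - 1 / x) = 1 - 1 / (μ * (x * (1 - x))) := by
    rw [← one_div_mul_one_div, show -1 / (1 - x) - 1 / x = -(1 / (x * (1 - x))) by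
      field_simp; ring]
    ring
  rw [← hval]
  refine hsplit.congr_of_eventuallyEq ?_
  filter_upwards [Ioo_mem_nhds hx0 hx1] with y ⟨hy0, hy1⟩
  rw [fmu, Real.log_div (by linarith) hy0.ne']

-- `x_*` and `x^*` are the roots of `μ x (1 - x) = 1`.
theorem hasDerivAt_fmu_of_four_le (hμ : 4 ≤ μ) (hx : x ∈ Ioo 0 1) :
    HasDerivAt (fmu μ) ((x - xlow μ) * (xhigh μ - x) / (x * (1 - x))) x := by
  obtain ⟨hx0, hx1⟩ := hx
  have h1x : 0 < 1 - x := by linarith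
  have hsq : Real.sqrt (1 / 4 - 1 / μ) ^ 2 = 1 / 4 - 1 / μ :=
    Real.sq_sqrt (by rw [sub_nonneg]; gcongr)
  convert hasDerivAt_fmu (μ := μ) ⟨hx0, hx1⟩ using 1
  unfold xlow xhigh
  generalize Real.sqrt (1 / 4 - 1 / μ) = s at hsq ⊢
  have hμ0 : μ ≠ 0 := by positivity
  field_simp at hsq ⊢
  linear_combination hsq

theorem continuousOn_fmu : ContinuousOn (fmu μ) (Ioo 0 1) :=
  fun _ hx => (hasDerivAt_fmu hx).continuousAt.continuousWithinAt

theorem strictAntiOn_fmu_Ioc (hμ : 4 ≤ μ) : StrictAntiOn (fmu μ) (Ioc 0 (xlow μ)) := by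
  have hsub : Ioc 0 (xlow μ) ⊆ Ioo 0 1 := fun y hy =>
    ⟨hy.1, hy.2.trans_lt ((xlow_le_xhigh μ).trans_lt (xhigh_lt_one (by positivity)))⟩
  refine strictAntiOn_of_hasDerivWithinAt_neg (convex_Ioc _ _) (continuousOn_fmu.mono hsub)
    (fun y hy => (hasDerivAt_fmu_of_four_le hμ (hsub (interior_subset hy))).hasDerivWithinAt)
    fun y hy => ?_
  rw [interior_Ioc] at hy
  obtain ⟨hy0, hy1⟩ := hsub (Ioo_subset_Ioc_self hy)
  have : y < xhigh μ := hy.2.trans_le (xlow_le_xhigh μ)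
  exact div_neg_of_neg_of_pos (mul_neg_of_neg_of_pos (by linarith [hy.2]) (by linarith))
    (mul_pos hy0 (by linarith))

theorem monotoneOn_fmu_Icc (hμ : 4 ≤ μ) : MonotoneOn (fmu μ) (Icc (xlow μ) (xhigh μ)) := by
  have hsub : Icc (xlow μ) (xhigh μ) ⊆ Ioo 0 1 := fun y hy =>
    ⟨(xlow_pos (by positivity)).trans_le hy.1, hy.2.trans_lt (xhigh_lt_one (by positivity))⟩
  refine monotoneOn_of_hasDerivWithinAt_nonneg (convex_Icc _ _) (continuousOn_fmu.mono hsub)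
    (fun y hy => (hasDerivAt_fmu_of_four_le hμ (hsub (interior_subset hy))).hasDerivWithinAt)
    fun y hy => ?_
  rw [interior_Icc] at hy
  obtain ⟨hy0, hy1⟩ := hsub (Ioo_subset_Icc_self hy)
  exact div_nonneg (mul_nonneg (by linarith [hy.1]) (by linarith [hy.2]))
    (mul_nonneg hy0.le (by linarith))

theorem antitoneOn_fmu_Ico (hμ : 4 ≤ μ) : AntitoneOn (fmu μ) (Ico (xhigh μ) 1) := by
  have hsub : Ico (xhigh μ) 1 ⊆ Ioo 0 1 := fun y hy =>
    ⟨((xlow_pos (by positivity)).trans_le (xlow_le_xhigh μ)).trans_le hy.1, hy.2⟩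
  refine antitoneOn_of_hasDerivWithinAt_nonpos (convex_Ico _ _) (continuousOn_fmu.mono hsub)
    (fun y hy => (hasDerivAt_fmu_of_four_le hμ (hsub (interior_subset hy))).hasDerivWithinAt)
    fun y hy => ?_
  rw [interior_Ico] at hy
  obtain ⟨hy0, hy1⟩ := hsub (Ioo_subset_Ico_self hy)
  have : xlow μ ≤ y := (xlow_le_xhigh μ).trans hy.1.le
  exact div_nonpos_of_nonpos_of_nonneg (mul_nonpos_of_nonneg_of_nonpos (by linarith)
    (by linarith [hy.1])) (mul_nonneg hy0.le (by linarith))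

theorem fmu_le_thetahigh (hμ : 4 ≤ μ) (hx : x ∈ Ico (xlow μ) 1) : fmu μ x ≤ thetahigh μ := by
  have hhigh : xhigh μ < 1 := xhigh_lt_one (by positivity)
  rcases le_total x (xhigh μ) with hle | hle
  · exact monotoneOn_fmu_Icc hμ ⟨hx.1, hle⟩ ⟨xlow_le_xhigh μ, le_rfl⟩ hle
  · exact antitoneOn_fmu_Ico hμ ⟨le_rfl, hhigh⟩ ⟨hle, hx.2⟩ hle

theorem tendsto_fmu_nhdsGT_zero (hμ : 0 < μ) : Tendsto (fmu μ) (𝓝[>] 0) atTop := by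
  have hratio : Tendsto (fun x : ℝ => (1 - x) / x) (𝓝[>] 0) atTop := by
    refine (tendsto_atTop_add_const_right _ (-1) tendsto_inv_nhdsGT_zero).congr' ?_
    filter_upwards [self_mem_nhdsWithin] with x (hx : 0 < x)
    field_simp
    ring
  exact (tendsto_id.mono_left nhdsWithin_le_nhds).add_atTop
    ((Real.tendsto_log_atTop.comp hratio).const_mul_atTop (by positivity))

theorem exists_fmu_eq_of_thetahigh_lt (hμ : 4 ≤ μ) (hθ : thetahigh μ < θ) :
    ∃ x ∈ Ioo 0 (xlow μ), fmu μ x = θ := by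
  have hlow : 0 < xlow μ := xlow_pos (by positivity)
  have hlow_one : xlow μ < 1 := (xlow_le_xhigh μ).trans_lt (xhigh_lt_one (by positivity))
  obtain ⟨c, hθc, hc⟩ := (((tendsto_fmu_nhdsGT_zero (by positivity)).eventually_gt_atTop θ).and
    (Ioo_mem_nhdsGT hlow)).exists
  have hθlow : thetalow μ < θ := (fmu_le_thetahigh hμ ⟨le_rfl, hlow_one⟩).trans_lt hθ
  obtain ⟨x, hx, hfx⟩ := intermediate_value_Ioo' hc.2.le
    (continuousOn_fmu.mono fun y hy => ⟨hc.1.trans_le hy.1, hy.2.trans_lt hlow_one⟩)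
    ⟨hθlow, hθc⟩
  exact ⟨x, ⟨hc.1.trans hx.1, hx.2⟩, hfx⟩

theorem lt_xlow_of_thetahigh_lt_fmu (hμ : 4 ≤ μ) (hx : x ∈ Ioo 0 1)
    (h : thetahigh μ < fmu μ x) : x < xlow μ := by
  by_contra! hle
  exact (fmu_le_thetahigh hμ ⟨hle, hx.2⟩).not_gt h

theorem existsUnique_fmu_eq_of_thetahigh_lt (hμ : 4 ≤ μ) (hθ : thetahigh μ < θ) :
    ∃ x ∈ Ioo 0 (xlow μ), fmu μ x = θ ∧ ∀ y ∈ Ioo 0 1, fmu μ y = θ → y = x := by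
  obtain ⟨x, hx, hfx⟩ := exists_fmu_eq_of_thetahigh_lt hμ hθ
  refine ⟨x, hx, hfx, fun y hy hfy => ?_⟩
  have hy_low : y < xlow μ := lt_xlow_of_thetahigh_lt_fmu hμ hy (hfy ▸ hθ)
  exact (strictAntiOn_fmu_Ioc hμ).injOn ⟨hy.1, hy_low.le⟩ ⟨hx.1, hx.2.le⟩ (hfy.trans hfx.symm)

theorem existsUnique_fmu_eq_of_lt_thetalow (hμ : 4 ≤ μ) (hθ : θ < thetalow μ) :
    ∃ x ∈ Ioo (xhigh μ) 1, fmu μ x = θ ∧ ∀ y ∈ Ioo 0 1, fmu μ y = θ → y = x := by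
  obtain ⟨x, hx, hfx, huniq⟩ := existsUnique_fmu_eq_of_thetahigh_lt (θ := 1 - θ) hμ
    (by rw [thetahigh_eq_one_sub_thetalow]; linarith)
  refine ⟨1 - x, ⟨by rw [xhigh_eq_one_sub_xlow]; linarith [hx.2], by linarith [hx.1]⟩,
    by rw [fmu_one_sub, hfx]; ring, fun y hy hfy => ?_⟩
  have := huniq (1 - y) ⟨by linarith [hy.2], by linarith [hy.1]⟩ (by rw [fmu_one_sub, hfy])
  linarith

theorem existsUnique_sigmoid_eq_self_of_fmu {I : Set ℝ} (hμ : μ ≠ 0) (hI : I ⊆ Ioo 0 1)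
    (h : ∃ x ∈ I, fmu μ x = θ ∧ ∀ y ∈ Ioo 0 1, fmu μ y = θ → y = x) :
    ∃ x, sigmoid μ θ x = x ∧ x ∈ I ∧ ∀ y, sigmoid μ θ y = y → y = x := by
  obtain ⟨x, hx, hfx, huniq⟩ := h
  refine ⟨x, (sigmoid_eq_self_iff hμ).2 ⟨hI hx, hfx⟩, hx, fun y hy => ?_⟩
  obtain ⟨hy, hfy⟩ := (sigmoid_eq_self_iff hμ).1 hy
  exact huniq y hy hfy

end

theorem stmt_7_general (μ θ : ℝ) (hμ : 4 < μ) :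
    (thetahigh μ < θ →
      ∃ x : ℝ, sigmoid μ θ x = x ∧ x ∈ Set.Ioo 0 (xlow μ) ∧
        ∀ y : ℝ, sigmoid μ θ y = y → y = x) ∧
    (θ < thetalow μ →
      ∃ x : ℝ, sigmoid μ θ x = x ∧ x ∈ Set.Ioo (xhigh μ) 1 ∧
        ∀ y : ℝ, sigmoid μ θ y = y → y = x) := by
  have hμ0 : μ ≠ 0 := by positivity
  have hhigh : xhigh μ < 1 := xhigh_lt_one (by positivity)
  refine ⟨fun hθ => ?_, fun hθ => ?_⟩
  · refine existsUnique_sigmoid_eq_self_of_fmu hμ0 (fun y hy => ⟨hy.1, ?_⟩)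
      (existsUnique_fmu_eq_of_thetahigh_lt hμ.le hθ)
    exact hy.2.trans_le (xlow_le_xhigh μ) |>.trans hhigh
  · refine existsUnique_sigmoid_eq_self_of_fmu hμ0 (fun y hy => ⟨?_, hy.2⟩)
      (existsUnique_fmu_eq_of_lt_thetalow hμ.le hθ)
    exact (xlow_pos (by positivity)).trans_le (xlow_le_xhigh μ) |>.trans hy.1

/-- Assume `μ > 4` and either `θ > θ^*(μ)`, or `0 ≤ θ < θ_*(μ)`.
Then the equation `S(x) = x` has exactly one real solution; in the first case it lies in
`(0, x_*(μ))` and in the second case it lies in `(x^*(μ), 1)`. -/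
theorem stmt_7 (μ θ : ℝ) (hμ : 4 < μ) (hθ0 : 0 ≤ θ)
    (hθ : thetahigh μ < θ ∨ θ < thetalow μ) :
    (thetahigh μ < θ →
      ∃ x : ℝ, sigmoid μ θ x = x ∧ x ∈ Set.Ioo 0 (xlow μ) ∧
        ∀ y : ℝ, sigmoid μ θ y = y → y = x) ∧
    (θ < thetalow μ →
      ∃ x : ℝ, sigmoid μ θ x = x ∧ x ∈ Set.Ioo (xhigh μ) 1 ∧
        ∀ y : ℝ, sigmoid μ θ y = y → y = x) :=
  stmt_7_general μ θ hμ
end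

section
/- (Comparison principle on ℤ.) Let v, w : [0,∞) → ℝ^ℤ be such that for each j ∈ ℤ the maps t ↦ v_j(t) and t ↦ w_j(t) are continuously differentiable, and suppose there is a constant M > 0 with |v_j(t)| + |w_j(t)| ≤ M for all t ≥ 0 and j ∈ ℤ. Assume that for all t > 0 and all j ∈ ℤ, v_j'(t) ≤ 𝒩(v_{j−1}(t), v_j(t), v_{j+1}(t)) and w_j'(t) ≥ 𝒩(w_{j−1}(t), w_j(t), w_{j+1}(t)). If v_j(0) ≤ w_j(0) for all j ∈ ℤ, then v_j(t) ≤ w_j(t) for all t > 0 and all j ∈ ℤ. -/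
/-- The nonlinearity
`𝒩(u,v,w) = (1−p−q)·(S(u) − v) + p·S'(v)·(u − S(v)) + q·(S(w) − v)`. -/
noncomputable def Nfun (μ θ p q u v w : ℝ) : ℝ :=
  (1 - p - q) * (sigmoid μ θ u - v)
    + p * deriv (sigmoid μ θ) v * (u - sigmoid μ θ v)
    + q * (sigmoid μ θ w - v)

open Set Filter Topology

lemma sigmoid_eq_real_sigmoid (μ θ x : ℝ) : sigmoid μ θ x = Real.sigmoid (μ * (x - θ)) := by
  rw [sigmoid, Real.sigmoid_def, one_div, neg_mul]

lemma sigmoid_mem_Icc (μ θ x : ℝ) : sigmoid μ θ x ∈ Icc 0 1 := by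
  rw [sigmoid_eq_real_sigmoid]
  exact ⟨Real.sigmoid_nonneg _, Real.sigmoid_le_one _⟩

lemma hasDerivAt_sigmoid (μ θ x : ℝ) :
    HasDerivAt (sigmoid μ θ) (μ * (sigmoid μ θ x * (1 - sigmoid μ θ x))) x := by
  have hlin : HasDerivAt (fun y => μ * (y - θ)) μ x := by
    simpa using ((hasDerivAt_id x).sub_const θ).const_mul μ
  have := (Real.hasDerivAt_sigmoid (μ * (x - θ))).comp x hlin
  rw [show sigmoid μ θ = Real.sigmoid ∘ fun y => μ * (y - θ) from
    funext (sigmoid_eq_real_sigmoid μ θ), Function.comp_apply]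
  exact this.congr_deriv (by ring)

lemma deriv_sigmoid (μ θ x : ℝ) :
    deriv (sigmoid μ θ) x = μ * (sigmoid μ θ x * (1 - sigmoid μ θ x)) :=
  (hasDerivAt_sigmoid μ θ x).deriv

lemma hasDerivAt_deriv_sigmoid (μ θ x : ℝ) :
    HasDerivAt (deriv (sigmoid μ θ))
      (μ ^ 2 * (sigmoid μ θ x * (1 - sigmoid μ θ x) * (1 - 2 * sigmoid μ θ x))) x := by
  have hS := hasDerivAt_sigmoid μ θ x
  have := ((hS.fun_mul ((hasDerivAt_const x 1).fun_sub hS))).const_mul μ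
  rw [show deriv (sigmoid μ θ) = _ from funext (deriv_sigmoid μ θ)]
  exact this.congr_deriv (by ring)

lemma monotone_sigmoid {μ : ℝ} (θ : ℝ) (hμ : 0 ≤ μ) : Monotone (sigmoid μ θ) := fun a b hab => by
  simp only [sigmoid_eq_real_sigmoid]
  exact Real.sigmoid_le (by nlinarith)

lemma deriv_sigmoid_nonneg {μ : ℝ} (θ : ℝ) (hμ : 0 ≤ μ) (x : ℝ) : 0 ≤ deriv (sigmoid μ θ) x := by
  obtain ⟨h0, h1⟩ := sigmoid_mem_Icc μ θ x
  rw [deriv_sigmoid]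
  have : 0 ≤ 1 - sigmoid μ θ x := by linarith
  positivity

lemma deriv_sigmoid_le {μ : ℝ} (θ : ℝ) (hμ : 0 ≤ μ) (x : ℝ) : deriv (sigmoid μ θ) x ≤ μ := by
  obtain ⟨h0, h1⟩ := sigmoid_mem_Icc μ θ x
  rw [deriv_sigmoid]
  nlinarith [mul_le_mul_of_nonneg_left (show sigmoid μ θ x * (1 - sigmoid μ θ x) ≤ 1 by nlinarith) hμ]

lemma sigmoid_sub_le {μ : ℝ} (θ : ℝ) (hμ : 0 ≤ μ) (a a' : ℝ) :
    sigmoid μ θ a - sigmoid μ θ a' ≤ μ * max (a - a') 0 := by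
  rcases le_total a a' with h | h
  · have := monotone_sigmoid θ hμ h
    have : 0 ≤ μ * max (a - a') 0 := by positivity
    linarith
  · rw [max_eq_left (sub_nonneg.2 h)]
    exact image_sub_le_mul_sub_of_deriv_le (fun x => (hasDerivAt_sigmoid μ θ x).differentiableAt)
      (deriv_sigmoid_le θ hμ) h

lemma deriv_sigmoid_mul_sub_le (μ θ m : ℝ) {x y : ℝ} (hxy : x ≤ y) :
    deriv (sigmoid μ θ) y * (m - sigmoid μ θ y) - deriv (sigmoid μ θ) x * (m - sigmoid μ θ x)
      ≤ μ ^ 2 * (|m| + 1) * (y - x) := by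
  have hd : ∀ z, HasDerivAt (fun z => deriv (sigmoid μ θ) z * (m - sigmoid μ θ z))
      (μ ^ 2 * (sigmoid μ θ z * (1 - sigmoid μ θ z) * (1 - 2 * sigmoid μ θ z)) * (m - sigmoid μ θ z)
        - deriv (sigmoid μ θ) z * deriv (sigmoid μ θ) z) z := fun z => by
    have := (hasDerivAt_deriv_sigmoid μ θ z).fun_mul
      ((hasDerivAt_const z m).fun_sub (hasDerivAt_sigmoid μ θ z))
    exact this.congr_deriv (by rw [deriv_sigmoid]; ring)
  refine image_sub_le_mul_sub_of_deriv_le (fun z => (hd z).differentiableAt) (fun z => ?_) hxy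
  rw [(hd z).deriv]
  obtain ⟨h0, h1⟩ := sigmoid_mem_Icc μ θ z
  set s := sigmoid μ θ z
  have hs : |s * (1 - s) * (1 - 2 * s)| ≤ 1 := by
    rw [abs_le]; constructor <;> nlinarith [mul_nonneg h0 (sub_nonneg.2 h1)]
  have hm : |m - s| ≤ |m| + 1 := (abs_sub _ _).trans (by rw [abs_of_nonneg h0]; linarith)
  have hprod : s * (1 - s) * (1 - 2 * s) * (m - s) ≤ |m| + 1 := by
    calc _ ≤ |s * (1 - s) * (1 - 2 * s) * (m - s)| := le_abs_self _
      _ = |s * (1 - s) * (1 - 2 * s)| * |m - s| := abs_mul _ _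
      _ ≤ 1 * (|m| + 1) := mul_le_mul hs hm (abs_nonneg _) zero_le_one
      _ = |m| + 1 := one_mul _
  nlinarith [mul_le_mul_of_nonneg_left hprod (sq_nonneg μ), mul_self_nonneg (deriv (sigmoid μ θ) z)]

lemma mul_le_of_le_of_nonneg_of_le_one {α : Type*} [Semiring α] [PartialOrder α]
    [IsOrderedRing α] {k x y : α} (hxy : x ≤ y) (hy : 0 ≤ y) (hk0 : 0 ≤ k)
    (hk1 : k ≤ 1) : k * x ≤ y :=
  (mul_le_mul_of_nonneg_left hxy hk0).trans (mul_le_of_le_one_left hy hk1)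

lemma Nfun_sub_le {μ θ p q M a b c a' b' c' : ℝ} (hμ : 0 ≤ μ) (hp : 0 ≤ p) (hq : 0 ≤ q)
    (hpq : p + q ≤ 1) (ha' : |a'| ≤ M) (hb : b' ≤ b) :
    Nfun μ θ p q a b c - Nfun μ θ p q a' b' c'
      ≤ (2 * μ + μ ^ 2 * (M + 1)) * (max (a - a') 0 + max (c - c') 0 + (b - b')) := by
  set S := sigmoid μ θ
  set S' := deriv S
  have hsplit : Nfun μ θ p q a b c - Nfun μ θ p q a' b' c'
      = (1 - p - q) * (S a - S a') + q * (S c - S c') - (1 - p) * (b - b')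
        + p * (S' b * (a - a')) + p * (S' b * (a' - S b) - S' b' * (a' - S b')) := by
    simp only [Nfun, S, S']; ring
  have hK : 0 ≤ μ ^ 2 * (M + 1) := mul_nonneg (sq_nonneg μ) (by linarith [abs_nonneg a'])
  have hA : 0 ≤ μ * max (a - a') 0 := by positivity
  have hC : 0 ≤ μ * max (c - c') 0 := by positivity
  have hB : 0 ≤ μ ^ 2 * (M + 1) * (b - b') := mul_nonneg hK (sub_nonneg.2 hb)
  have h1 : (1 - p - q) * (S a - S a') ≤ μ * max (a - a') 0 :=
    mul_le_of_le_of_nonneg_of_le_one (sigmoid_sub_le θ hμ a a') hA (by linarith) (by linarith)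
  have h2 : q * (S c - S c') ≤ μ * max (c - c') 0 :=
    mul_le_of_le_of_nonneg_of_le_one (sigmoid_sub_le θ hμ c c') hC hq (by linarith)
  have h3 : 0 ≤ (1 - p) * (b - b') := mul_nonneg (by linarith) (sub_nonneg.2 hb)
  have h4 : p * (S' b * (a - a')) ≤ μ * max (a - a') 0 := by
    refine mul_le_of_le_of_nonneg_of_le_one ?_ hA hp (by linarith)
    exact (mul_le_mul_of_nonneg_left (le_max_left _ _) (deriv_sigmoid_nonneg θ hμ b)).trans
      (mul_le_mul_of_nonneg_right (deriv_sigmoid_le θ hμ b) (le_max_right _ _))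
  have h5 : p * (S' b * (a' - S b) - S' b' * (a' - S b')) ≤ μ ^ 2 * (M + 1) * (b - b') := by
    refine mul_le_of_le_of_nonneg_of_le_one ?_ hB hp (by linarith)
    refine (deriv_sigmoid_mul_sub_le μ θ a' hb).trans ?_
    gcongr
  rw [hsplit]
  nlinarith [mul_nonneg hK (le_max_right (a - a') 0), mul_nonneg hK (le_max_right (c - c') 0),
    mul_nonneg hμ (sub_nonneg.2 hb)]

noncomputable def latticeWeight (j : ℤ) : ℝ := 2⁻¹ ^ j.natAbs

lemma latticeWeight_pos (j : ℤ) : 0 < latticeWeight j := by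
  unfold latticeWeight; positivity

lemma latticeWeight_le_two_mul {i j : ℤ} (h : j.natAbs ≤ i.natAbs + 1) :
    latticeWeight i ≤ 2 * latticeWeight j := by
  calc latticeWeight i = 2 * 2⁻¹ ^ (i.natAbs + 1) := by
        rw [latticeWeight, pow_succ]; ring
    _ ≤ 2 * latticeWeight j := by
        gcongr 2 * ?_
        exact pow_le_pow_of_le_one (by norm_num) (by norm_num) h

lemma Int.tendsto_natAbs_cofinite : Tendsto Int.natAbs cofinite atTop := by
  rw [← Nat.cofinite_eq_atTop]
  refine Tendsto.cofinite_of_finite_preimage_singleton fun n => ?_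
  refine Set.Finite.subset (Set.toFinite {(n : ℤ), -(n : ℤ)}) fun j hj => ?_
  simpa using Int.natAbs_eq_iff.1 hj

lemma tendsto_latticeWeight_cofinite : Tendsto latticeWeight cofinite (𝓝 0) :=
  (tendsto_pow_atTop_nhds_zero_of_lt_one (by norm_num) (by norm_num)).comp
    Int.tendsto_natAbs_cofinite

lemma HasDerivAt.nonneg_of_isMaxOn_Icc {g : ℝ → ℝ} {g' a t : ℝ} (hg : HasDerivAt g g' t)
    (hat : a < t) (hmax : IsMaxOn g (Icc a t) t) : 0 ≤ g' := by
  have hcone : a - t ∈ posTangentConeAt (Icc a t) t :=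
    sub_mem_posTangentConeAt_of_segment_subset (by rw [segment_symm, segment_eq_Icc hat.le])
  have := hmax.localize.hasFDerivWithinAt_nonpos hg.hasDerivWithinAt.hasFDerivWithinAt hcone
  rw [ContinuousLinearMap.toSpanSingleton_apply, smul_eq_mul] at this
  nlinarith

lemma exists_first_zero {ι : Type*} {g : ι → ℝ → ℝ} {a b : ℝ}
    (hg : ∀ i, ContinuousOn (g i) (Icc a b)) (h0 : ∀ i, g i a < 0)
    (hfin : ∀ᶠ i in cofinite, ∀ t ∈ Icc a b, g i t < 0)
    (hbad : ∃ i, ∃ t ∈ Icc a b, 0 ≤ g i t) :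
    ∃ t₁ ∈ Ioc a b, ∃ i, g i t₁ = 0 ∧ ∀ j, ∀ s ∈ Icc a t₁, g j s ≤ 0 := by
  set A := {t ∈ Icc a b | ∃ i, 0 ≤ g i t}
  have hA : A = ⋃ i ∈ {i | ¬ ∀ t ∈ Icc a b, g i t < 0}, {t ∈ Icc a b | 0 ≤ g i t} := by
    ext t
    simp only [A, mem_iUnion, exists_prop, mem_ofPred_eq]
    constructor
    · rintro ⟨ht, i, hi⟩; exact ⟨i, fun h => (h t ht).not_ge hi, ht, hi⟩
    · rintro ⟨i, -, ht, hi⟩; exact ⟨ht, i, hi⟩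
  have hAcompact : IsCompact A := by
    refine isCompact_Icc.of_isClosed_subset ?_ (sep_subset _ _)
    rw [hA]
    exact (eventually_cofinite.1 hfin).isClosed_biUnion fun i _ =>
      isClosed_Icc.isClosed_le continuousOn_const (hg i)
  obtain ⟨i₀, t₀, ht₀, hi₀⟩ := hbad
  obtain ⟨t₁, ⟨ht₁, i, hi⟩, hleast⟩ := hAcompact.exists_isLeast ⟨t₀, ht₀, i₀, hi₀⟩
  have ht₁pos : a < t₁ := ht₁.1.lt_of_ne fun h => (h0 i).not_ge (h ▸ hi)
  have hbefore : ∀ j, ∀ s ∈ Ico a t₁, g j s ≤ 0 := fun j s hs =>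
    not_lt.1 fun hpos => hs.2.not_ge (hleast ⟨⟨hs.1, hs.2.le.trans ht₁.2⟩, j, hpos.le⟩)
  have hupto : ∀ j, ∀ s ∈ Icc a t₁, g j s ≤ 0 := by
    intro j
    rw [← closure_Ico ht₁pos.ne]
    exact le_on_closure (hbefore j) ((hg j).mono (by
      rw [closure_Ico ht₁pos.ne]; exact Icc_subset_Icc_right ht₁.2)) continuousOn_const
  exact ⟨t₁, ⟨ht₁pos, ht₁.2⟩, i, le_antisymm (hupto i t₁ ⟨ht₁.1, le_rfl⟩) hi, hupto⟩

lemma latticeWeight_mul_le_of_touch {x : ℤ → ℝ} {d L c : ℝ} {i : ℤ} (hL : 0 ≤ L)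
    (hd : 0 < x i → d ≤ L * (max (x (i - 1)) 0 + max (x (i + 1)) 0 + x i))
    (hc : 0 < c) (hi : latticeWeight i * x i = c) (hle : ∀ j, latticeWeight j * x j ≤ c) :
    latticeWeight i * d ≤ 5 * L * c := by
  have hρ := latticeWeight_pos i
  have hxi : 0 < x i := pos_of_mul_pos_right (hi ▸ hc) hρ.le
  have hnbr : ∀ j, j.natAbs ≤ i.natAbs + 1 → latticeWeight i * max (x j) 0 ≤ 2 * c := by
    intro j hj
    calc latticeWeight i * max (x j) 0 ≤ 2 * latticeWeight j * max (x j) 0 :=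
          mul_le_mul_of_nonneg_right (latticeWeight_le_two_mul hj) (le_max_right _ _)
      _ = 2 * max (latticeWeight j * x j) 0 := by
          rw [mul_assoc, mul_max_of_nonneg _ _ (latticeWeight_pos j).le, mul_zero]
      _ ≤ 2 * c := by gcongr; exact max_le (hle j) hc.le
  have hprev := hnbr (i - 1) (Int.natAbs_sub_le i 1)
  have hnext := hnbr (i + 1) (Int.natAbs_add_le i 1)
  calc latticeWeight i * d
      ≤ L * (latticeWeight i * max (x (i - 1)) 0 + latticeWeight i * max (x (i + 1)) 0
          + latticeWeight i * x i) := by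
        nlinarith [mul_le_mul_of_nonneg_left (hd hxi) hρ.le]
    _ ≤ L * (2 * c + 2 * c + c) := by gcongr; exact hi.le
    _ = 5 * L * c := by ring

section LatticeComparison

variable {u u' : ℝ → ℤ → ℝ} {L M : ℝ}

lemma latticeWeight_mul_lt_of_deriv_le (hL : 0 ≤ L)
    (hcont : ∀ j, ContinuousOn (fun t => u t j) (Ici 0))
    (hderiv : ∀ j, ∀ t > 0, HasDerivAt (fun t => u t j) (u' t j) t)
    (hM : ∀ t ≥ 0, ∀ j, u t j ≤ M)
    (hineq : ∀ t > 0, ∀ j, 0 < u t j →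
      u' t j ≤ L * (max (u t (j - 1)) 0 + max (u t (j + 1)) 0 + u t j))
    (h0 : ∀ j, u 0 j ≤ 0) {ε : ℝ} (hε : 0 < ε) (T : ℝ) :
    ∀ j, ∀ t ∈ Icc 0 T, latticeWeight j * u t j < ε * Real.exp ((5 * L + 1) * t) := by
  set K := 5 * L + 1
  set g : ℤ → ℝ → ℝ := fun j t => latticeWeight j * u t j - ε * Real.exp (K * t)
  suffices ∀ j, ∀ t ∈ Icc 0 T, g j t < 0 from fun j t ht => sub_neg.1 (this j t ht)
  have hexp : ∀ t ≥ 0, 1 ≤ Real.exp (K * t) := fun t ht =>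
    Real.one_le_exp (mul_nonneg (by linarith) ht)
  by_contra! hbad
  have hg : ∀ j, ContinuousOn (g j) (Icc 0 T) := fun j =>
    (((hcont j).mono Icc_subset_Ici_self).const_smul (latticeWeight j)).sub
      (show ContinuousOn (fun t => ε * Real.exp (K * t)) _ by fun_prop)
  have hg0 : ∀ j, g j 0 < 0 := fun j => by
    simp only [g, mul_zero, Real.exp_zero, mul_one]
    nlinarith [mul_nonpos_of_nonneg_of_nonpos (latticeWeight_pos j).le (h0 j)]
  have hfin : ∀ᶠ j in cofinite, ∀ t ∈ Icc 0 T, g j t < 0 := by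
    have := (tendsto_latticeWeight_cofinite.mul_const M).eventually (gt_mem_nhds (a := ε) (by simpa))
    filter_upwards [this] with j hj t ht
    have := mul_le_mul_of_nonneg_left (hM t ht.1 j) (latticeWeight_pos j).le
    nlinarith [hexp t ht.1]
  obtain ⟨t₁, ht₁, i, hi, hle⟩ := exists_first_zero hg hg0 hfin hbad
  have hgd : HasDerivAt (g i) (latticeWeight i * u' t₁ i - ε * (Real.exp (K * t₁) * K)) t₁ :=
    ((hderiv i t₁ ht₁.1).const_mul _).sub
      (((hasDerivAt_id t₁).const_mul K).exp.const_mul ε |>.congr_deriv (by simp))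
  have hslope := hgd.nonneg_of_isMaxOn_Icc ht₁.1 fun s hs => by
    simpa [hi] using hle i s hs
  set c := ε * Real.exp (K * t₁)
  have htouch := latticeWeight_mul_le_of_touch (x := u t₁) (d := u' t₁ i) hL (hineq t₁ ht₁.1 i)
    (by positivity) (sub_eq_zero.1 hi) fun j => sub_nonpos.1 (hle j t₁ ⟨ht₁.1.le, le_rfl⟩)
  have hc : 0 < c := by positivity
  nlinarith

theorem lattice_comparison (hL : 0 ≤ L)
    (hcont : ∀ j, ContinuousOn (fun t => u t j) (Ici 0))
    (hderiv : ∀ j, ∀ t > 0, HasDerivAt (fun t => u t j) (u' t j) t)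
    (hM : ∀ t ≥ 0, ∀ j, u t j ≤ M)
    (hineq : ∀ t > 0, ∀ j, 0 < u t j →
      u' t j ≤ L * (max (u t (j - 1)) 0 + max (u t (j + 1)) 0 + u t j))
    (h0 : ∀ j, u 0 j ≤ 0) :
    ∀ t ≥ 0, ∀ j, u t j ≤ 0 := by
  intro t ht j
  by_contra! hpos
  set ε := latticeWeight j * u t j / Real.exp ((5 * L + 1) * t)
  have hε : 0 < ε := div_pos (mul_pos (latticeWeight_pos j) hpos) (Real.exp_pos _)
  have := latticeWeight_mul_lt_of_deriv_le hL hcont hderiv hM hineq h0 hε t j t ⟨ht, le_rfl⟩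
  rw [div_mul_cancel₀ _ (Real.exp_pos _).ne'] at this
  exact lt_irrefl _ this

end LatticeComparison

theorem stmt_16_general (μ θ p q : ℝ) (hμ : 0 < μ)
    (hp : 0 ≤ p) (hq0 : 0 ≤ q) (hpq : p + q ≤ 1)
    (v w v' w' : ℝ → ℤ → ℝ)
    -- componentwise continuously differentiable on [0,∞)
    (hv : ∀ j : ℤ, ∀ t ∈ Set.Ici (0 : ℝ),
      HasDerivWithinAt (fun s => v s j) (v' t j) (Set.Ici (0 : ℝ)) t)
    (hw : ∀ j : ℤ, ∀ t ∈ Set.Ici (0 : ℝ),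
      HasDerivWithinAt (fun s => w s j) (w' t j) (Set.Ici (0 : ℝ)) t)
    -- uniform bound
    (M : ℝ)
    (hbound : ∀ t ∈ Set.Ici (0 : ℝ), ∀ j : ℤ, |v t j| + |w t j| ≤ M)
    -- differential inequalities
    (hsub : ∀ t > (0 : ℝ), ∀ j : ℤ,
      v' t j ≤ Nfun μ θ p q (v t (j - 1)) (v t j) (v t (j + 1)))
    (hsup : ∀ t > (0 : ℝ), ∀ j : ℤ,
      Nfun μ θ p q (w t (j - 1)) (w t j) (w t (j + 1)) ≤ w' t j)
    -- initial ordering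
    (hinit : ∀ j : ℤ, v 0 j ≤ w 0 j) :
    ∀ t > (0 : ℝ), ∀ j : ℤ, v t j ≤ w t j := by
  have hwM : ∀ t ≥ 0, ∀ j, |w t j| ≤ M := fun t ht j =>
    (le_add_of_nonneg_left (abs_nonneg _)).trans (hbound t ht j)
  have hL : 0 ≤ 2 * μ + μ ^ 2 * (M + 1) := by
    have := (abs_nonneg _).trans (hwM 0 le_rfl 0)
    positivity
  have hcomp := lattice_comparison (u := fun t j => v t j - w t j)
    (u' := fun t j => v' t j - w' t j) (M := M) hL
    (fun j t ht => ((hv j t ht).sub (hw j t ht)).continuousWithinAt)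
    (fun j t ht => ((hv j t ht.le).sub (hw j t ht.le)).hasDerivAt (Ici_mem_nhds ht))
    (fun t ht j => by linarith [hbound t ht j, le_abs_self (v t j), neg_abs_le (w t j)])
    (fun t ht j hpos => by
      have := Nfun_sub_le (θ := θ) (a := v t (j - 1)) (b := v t j) (c := v t (j + 1))
        (c' := w t (j + 1)) hμ.le hp hq0 hpq (hwM t ht.le (j - 1)) (sub_pos.1 hpos).le
      linarith [hsub t ht j, hsup t ht j])
    (fun j => sub_nonpos.2 (hinit j))
  exact fun t ht j => sub_nonpos.1 (hcomp t ht.le j)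

/-- Comparison principle on `ℤ`. If `v, w : [0,∞) → ℝ^ℤ` are componentwise
`C¹` and uniformly bounded, `v` is a subsolution and `w` a supersolution of the lattice
equation on `ℤ`, and `v_j(0) ≤ w_j(0)` for all `j`, then `v_j(t) ≤ w_j(t)` for all
`t > 0` and `j ∈ ℤ`. -/
theorem stmt_16 (μ θ p q : ℝ) (hμ : 0 < μ) (hθ : 0 ≤ θ)
    (hp : 0 ≤ p) (hq0 : 0 ≤ q) (hq1 : q ≤ 1) (hpq : p + q ≤ 1)
    (v w v' w' : ℝ → ℤ → ℝ)
    -- componentwise continuously differentiable on [0,∞)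
    (hv : ∀ j : ℤ, ∀ t ∈ Set.Ici (0 : ℝ),
      HasDerivWithinAt (fun s => v s j) (v' t j) (Set.Ici (0 : ℝ)) t)
    (hw : ∀ j : ℤ, ∀ t ∈ Set.Ici (0 : ℝ),
      HasDerivWithinAt (fun s => w s j) (w' t j) (Set.Ici (0 : ℝ)) t)
    (hv' : ∀ j : ℤ, ContinuousOn (fun t => v' t j) (Set.Ici (0 : ℝ)))
    (hw' : ∀ j : ℤ, ContinuousOn (fun t => w' t j) (Set.Ici (0 : ℝ)))
    -- uniform bound
    (M : ℝ) (hM : 0 < M)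
    (hbound : ∀ t ∈ Set.Ici (0 : ℝ), ∀ j : ℤ, |v t j| + |w t j| ≤ M)
    -- differential inequalities
    (hsub : ∀ t > (0 : ℝ), ∀ j : ℤ,
      v' t j ≤ Nfun μ θ p q (v t (j - 1)) (v t j) (v t (j + 1)))
    (hsup : ∀ t > (0 : ℝ), ∀ j : ℤ,
      Nfun μ θ p q (w t (j - 1)) (w t j) (w t (j + 1)) ≤ w' t j)
    -- initial ordering
    (hinit : ∀ j : ℤ, v 0 j ≤ w 0 j) :
    ∀ t > (0 : ℝ), ∀ j : ℤ, v t j ≤ w t j :=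
  stmt_16_general μ θ p q hμ hp hq0 hpq v w v' w' hv hw M hbound hsub hsup hinit
end
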